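/- arXiv:2412.21038 — 3 statements merged into one kernel-verified Lean document; each statement's English description precedes it below -/
import Mathlib

section
/- The Hermite coefficients of the soft-thresholding function η_s(x,t) := sign(x)·(|x|−t)₊ with threshold t ≥ 0 satisfy: a₀ = 0, a₁ = 1 − erf(t/√2), a_k = 0 for all even k ≥ 2, and a_k = √(2/(k(k−1)π)) e^{−t²/2} h_{k−2}(t) for all odd k ≥ 3, where a_k := ∫ η_s(x,t) h_k(x) φ(x) dx and {h_k} are the orthonormal Hermite polynomials under the standard Gaussian density φ. -/
/-- The orthonormal Hermite polynomial `h_k` under the standard Gaussian density. -/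
noncomputable def hermiteNormalized (k : ℕ) (x : ℝ) : ℝ :=
  ((Polynomial.hermite k).map (Int.castRingHom ℝ)).eval x / Real.sqrt (Nat.factorial k)

/-- The standard Gaussian density `φ(x) = (2π)^{-1/2} e^{-x²/2}`. -/
noncomputable def gaussianDensity (x : ℝ) : ℝ :=
  (Real.sqrt (2 * Real.pi))⁻¹ * Real.exp (-x ^ 2 / 2)

/-- The Gauss error function `erf`. -/
noncomputable def erf (x : ℝ) : ℝ :=
  (2 / Real.sqrt Real.pi) * ∫ s in (0 : ℝ)..x, Real.exp (-s ^ 2)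

/-- The soft-thresholding function `η_s(x,t) = sign(x)·(|x|−t)₊`. -/
noncomputable def softThreshold (x t : ℝ) : ℝ := Real.sign x * max (|x| - t) 0

/-! With `He_k` the monic Hermite polynomials and `g(x) = e^{-x²/2}`, the recursion
`He_{k+1} = X He_k - He_k'` says `(He_k g)' = -He_{k+1} g`. Writing
`η_s(x,t) = (x-t)₊ - (-x-t)₊` (valid since `t ≥ 0`) and using `He_k(-x) = (-1)^k He_k(x)`,
`∫ η_s He_k g = (1 - (-1)^k) ∫_t^∞ (x - t) He_k g`, which vanishes for even `k`. For odd `k`,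
integration by parts gives `∫_t^∞ (x - t) He_{n+1} g = ∫_t^∞ He_n g`, which is
`He_{k-2}(t) g(t)` when `k ≥ 3` and the Gaussian tail `√(2π)/2 · (1 - erf(t/√2))` when `k = 1`. -/

open Polynomial MeasureTheory Real Set

noncomputable def realHermite (n : ℕ) : ℝ[X] := (hermite n).map (Int.castRingHom ℝ)

lemma realHermite_zero : realHermite 0 = 1 := by simp [realHermite]

lemma realHermite_succ (n : ℕ) :
    realHermite (n + 1) = X * realHermite n - derivative (realHermite n) := by
  simp [realHermite, hermite_succ, derivative_map]

lemma eval_neg_realHermite (n : ℕ) (x : ℝ) :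
    (realHermite n).eval (-x) = (-1) ^ n * (realHermite n).eval x := by
  rw [eval_eq_sum_range, eval_eq_sum_range, Finset.mul_sum]
  refine Finset.sum_congr rfl fun i _ => ?_
  rcases Nat.even_or_odd (n + i) with h | h
  · rw [neg_pow, neg_one_pow_congr (Nat.even_add.mp h).symm]
    ring
  · simp [realHermite, coeff_map, coeff_hermite_of_odd_add h]

lemma hasDerivAt_realHermite_mul_gaussian (n : ℕ) (x : ℝ) :
    HasDerivAt (fun x => (realHermite n).eval x * exp (-x ^ 2 / 2))
      (-((realHermite (n + 1)).eval x * exp (-x ^ 2 / 2))) x := by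
  have hg : HasDerivAt (fun x : ℝ => exp (-x ^ 2 / 2)) (-x * exp (-x ^ 2 / 2)) x := by
    convert (((hasDerivAt_pow 2 x).fun_neg).div_const 2).exp using 1
    push_cast
    ring
  refine (((realHermite n).hasDerivAt x).mul hg).congr_deriv ?_
  rw [realHermite_succ]
  simp only [eval_sub, eval_mul, eval_X]
  ring

lemma integrable_eval_mul_exp_neg_mul_sq {b : ℝ} (hb : 0 < b) (p : ℝ[X]) :
    Integrable fun x => p.eval x * exp (-b * x ^ 2) := by
  induction p using Polynomial.induction_on' with
  | add p q hp hq => exact (hp.add hq).congr (.of_forall fun x => by simp [add_mul])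
  | monomial n a =>
    have h := (integrable_rpow_mul_exp_neg_mul_sq hb
      (neg_one_lt_zero.trans_le (Nat.cast_nonneg n))).const_mul a
    simpa [mul_assoc] using h

lemma integrable_eval_mul_gaussian (p : ℝ[X]) :
    Integrable fun x => p.eval x * exp (-x ^ 2 / 2) := by
  simpa [neg_div, div_eq_inv_mul] using integrable_eval_mul_exp_neg_mul_sq one_half_pos p

lemma integral_Ioi_of_hasDerivAt_of_integrableOn {E : Type*} [NormedAddCommGroup E]
    [NormedSpace ℝ E] [CompleteSpace E] {f f' : ℝ → E} {a : ℝ}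
    (hderiv : ∀ x ∈ Ici a, HasDerivAt f (f' x) x) (hf : IntegrableOn f (Ioi a))
    (hf' : IntegrableOn f' (Ioi a)) :
    ∫ x in Ioi a, f' x = -f a := by
  rw [integral_Ioi_of_hasDerivAt_of_tendsto' hderiv hf'
    (tendsto_zero_of_hasDerivAt_of_integrableOn_Ioi (fun x hx => hderiv x hx.out.le) hf' hf),
    zero_sub]

lemma integral_Ioi_realHermite_succ_mul_gaussian (n : ℕ) (c : ℝ) :
    ∫ x in Ioi c, (realHermite (n + 1)).eval x * exp (-x ^ 2 / 2)
      = (realHermite n).eval c * exp (-c ^ 2 / 2) := by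
  simpa using integral_Ioi_of_hasDerivAt_of_integrableOn
    (fun x _ => (hasDerivAt_realHermite_mul_gaussian n x).neg)
    (integrable_eval_mul_gaussian _).neg.integrableOn
    (by simpa using (integrable_eval_mul_gaussian (realHermite (n + 1))).integrableOn)

lemma integrable_sub_mul_eval_mul_gaussian (t : ℝ) (p : ℝ[X]) :
    Integrable fun x => (x - t) * (p.eval x * exp (-x ^ 2 / 2)) := by
  refine (integrable_eval_mul_gaussian ((X - C t) * p)).congr (.of_forall fun x => ?_)
  simp [mul_assoc]

lemma integral_Ioi_sub_mul_realHermite_succ_mul_gaussian (n : ℕ) (t : ℝ) :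
    ∫ x in Ioi t, (x - t) * ((realHermite (n + 1)).eval x * exp (-x ^ 2 / 2))
      = ∫ x in Ioi t, (realHermite n).eval x * exp (-x ^ 2 / 2) := by
  have hderiv (x : ℝ) :
      HasDerivAt (fun x => -((x - t) * ((realHermite n).eval x * exp (-x ^ 2 / 2))))
      ((x - t) * ((realHermite (n + 1)).eval x * exp (-x ^ 2 / 2))
        - (realHermite n).eval x * exp (-x ^ 2 / 2)) x := by
    refine ((((hasDerivAt_id x).sub_const t).mul
      (hasDerivAt_realHermite_mul_gaussian n x)).neg).congr_deriv ?_
    simp only [id]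
    ring
  have h := integral_Ioi_of_hasDerivAt_of_integrableOn (a := t) (fun x _ => hderiv x)
    (integrable_sub_mul_eval_mul_gaussian t _).neg.integrableOn
    ((integrable_sub_mul_eval_mul_gaussian t _).sub (integrable_eval_mul_gaussian _)).integrableOn
  rw [integral_sub (integrable_sub_mul_eval_mul_gaussian t _).integrableOn
    (integrable_eval_mul_gaussian _).integrableOn] at h
  simpa [sub_eq_zero] using h

lemma integral_Ioi_gaussian (t : ℝ) :
    ∫ x in Ioi t, exp (-x ^ 2 / 2) = √(2 * π) / 2 * (1 - erf (t / √2)) := by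
  have hint : Integrable fun x : ℝ => exp (-x ^ 2 / 2) := by
    simpa using integrable_eval_mul_gaussian 1
  have hhalf : ∫ x in Ioi 0, exp (-x ^ 2 / 2) = √(2 * π) / 2 := by
    have hg : (fun x : ℝ => exp (-x ^ 2 / 2)) = fun x => exp (-(1 / 2) * x ^ 2) := by
      ext x; ring_nf
    rw [hg, integral_gaussian_Ioi, div_div_eq_mul_div, div_one, mul_comm]
  have hs2 : √2 ≠ 0 := by positivity
  have hsubst : ∫ x in (0 : ℝ)..t, exp (-x ^ 2 / 2)
      = √2 * ∫ s in (0 : ℝ)..(t / √2), exp (-s ^ 2) := by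
    have hs (s : ℝ) : exp (-s ^ 2) = exp (-(√2 * s) ^ 2 / 2) := by
      rw [mul_pow, sq_sqrt zero_le_two]; ring_nf
    simp_rw [hs]
    rw [intervalIntegral.integral_comp_mul_left (fun x => exp (-x ^ 2 / 2)) hs2, mul_zero,
      mul_div_cancel₀ _ hs2, smul_eq_mul, mul_inv_cancel_left₀ hs2]
  have htail : ∫ x in Ioi t, exp (-x ^ 2 / 2)
      = √(2 * π) / 2 - √2 * ∫ s in (0 : ℝ)..(t / √2), exp (-s ^ 2) := by
    linarith [intervalIntegral.integral_Ioi_sub_Ioi' hint.integrableOn hint.integrableOn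
      (a := 0) (b := t)]
  rw [htail, erf, sqrt_mul zero_le_two]
  field_simp

lemma hermiteNormalized_eq (k : ℕ) (x : ℝ) :
    hermiteNormalized k x = (realHermite k).eval x / √(k.factorial : ℝ) := rfl

lemma softThreshold_eq_max_sub_max {t : ℝ} (ht : 0 ≤ t) (x : ℝ) :
    softThreshold x t = max (x - t) 0 - max (-x - t) 0 := by
  rcases lt_trichotomy x 0 with hx | rfl | hx
  · simp [softThreshold, hx, Real.sign_of_neg, abs_of_neg,
      max_eq_right (by linarith : x - t ≤ 0)]
  · simp [softThreshold, ht]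
  · simp [softThreshold, hx, Real.sign_of_pos, abs_of_pos,
      max_eq_right (by linarith : -x - t ≤ 0)]

lemma max_sub_mul_eq_indicator (t : ℝ) (f : ℝ → ℝ) :
    (fun x => max (x - t) 0 * f x) = (Ioi t).indicator fun x => (x - t) * f x := by
  ext x
  by_cases hx : t < x
  · simp [hx, max_eq_left (sub_nonneg.mpr hx.le)]
  · simp [hx, max_eq_right (sub_nonpos.mpr (not_lt.mp hx))]

lemma integral_softThreshold_mul_realHermite_mul_gaussian {t : ℝ} (ht : 0 ≤ t) (k : ℕ) :
    ∫ x, softThreshold x t * ((realHermite k).eval x * exp (-x ^ 2 / 2))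
      = (1 - (-1) ^ k) * ∫ x in Ioi t, (x - t) * ((realHermite k).eval x * exp (-x ^ 2 / 2)) := by
  set f := fun x => (realHermite k).eval x * exp (-x ^ 2 / 2)
  have hf_neg (x : ℝ) : f (-x) = (-1) ^ k * f x := by
    simp only [f, eval_neg_realHermite, neg_sq, mul_assoc]
  have hint : Integrable fun x => max (x - t) 0 * f x := by
    rw [max_sub_mul_eq_indicator]
    exact (integrable_sub_mul_eval_mul_gaussian t _).indicator measurableSet_Ioi
  have hint_neg : Integrable fun x => max (-x - t) 0 * f x := by
    have h : Integrable fun x => max (x - t) 0 * f (-x) := by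
      simpa only [hf_neg, mul_left_comm] using hint.const_mul ((-1) ^ k)
    simpa only [neg_neg] using h.comp_neg
  have hindicator : ∫ x, max (x - t) 0 * f x = ∫ x in Ioi t, (x - t) * f x := by
    rw [max_sub_mul_eq_indicator, integral_indicator measurableSet_Ioi]
  have hreflect : ∫ x, max (-x - t) 0 * f x = (-1) ^ k * ∫ x, max (x - t) 0 * f x := by
    rw [← integral_neg_eq_self, ← integral_const_mul]
    simp only [neg_neg, hf_neg]
    congr 1; ext x; ring
  calc ∫ x, softThreshold x t * f x
      = (∫ x, max (x - t) 0 * f x) - ∫ x, max (-x - t) 0 * f x := by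
        simp only [softThreshold_eq_max_sub_max ht, sub_mul]
        exact integral_sub hint hint_neg
    _ = (1 - (-1) ^ k) * ∫ x in Ioi t, (x - t) * f x := by
        rw [hreflect, hindicator]
        ring

lemma integral_softThreshold_mul_hermiteNormalized_mul_gaussianDensity (t : ℝ) (k : ℕ) :
    ∫ x, softThreshold x t * hermiteNormalized k x * gaussianDensity x
      = (√(k.factorial : ℝ) * √(2 * π))⁻¹ *
          ∫ x, softThreshold x t * ((realHermite k).eval x * exp (-x ^ 2 / 2)) := by
  rw [← integral_const_mul]
  congr 1; ext x
  rw [hermiteNormalized_eq, gaussianDensity]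
  field_simp

lemma two_mul_inv_sqrt_factorial_mul_sqrt_two_pi {k : ℕ} (hk : 2 ≤ k) :
    2 * (√(k.factorial : ℝ) * √(2 * π))⁻¹
      = √(2 / ((k : ℝ) * ((k : ℝ) - 1) * π)) * (√((k - 2).factorial : ℝ))⁻¹ := by
  obtain ⟨n, rfl⟩ := Nat.exists_eq_add_of_le' hk
  have hfact : ((n + 2).factorial : ℝ) = (n + 2) * (n + 1) * n.factorial := by
    push_cast [Nat.factorial_succ]; ring
  have hcast : ((n + 2 : ℕ) : ℝ) * (((n + 2 : ℕ) : ℝ) - 1) = (n + 2) * (n + 1) := by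
    push_cast; ring
  have hpos : (0 : ℝ) ≤ 2 / ((n + 2) * (n + 1) * π) := by positivity
  rw [Nat.add_sub_cancel, hcast, ← sq_eq_sq₀ (by positivity) (by positivity)]
  simp only [mul_pow, inv_pow, sq_sqrt (Nat.cast_nonneg _), sq_sqrt hpos,
    sq_sqrt (mul_pos two_pos pi_pos).le]
  rw [hfact]
  field_simp

/-- Hermite coefficients of soft thresholding: `a₀ = 0`, `a₁ = 1 − erf(t/√2)`,
`a_k = 0` for even `k ≥ 2`, and
`a_k = √(2/(k(k−1)π)) e^{−t²/2} h_{k−2}(t)` for odd `k ≥ 3`. -/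
theorem softThreshold_hermite_coeffs (t : ℝ) (ht : 0 ≤ t)
    (a : ℕ → ℝ)
    (ha : ∀ k, a k = ∫ x : ℝ, softThreshold x t * hermiteNormalized k x * gaussianDensity x) :
    a 0 = 0 ∧
    a 1 = 1 - erf (t / Real.sqrt 2) ∧
    (∀ k : ℕ, Even k → 2 ≤ k → a k = 0) ∧
    (∀ k : ℕ, Odd k → 3 ≤ k →
      a k = Real.sqrt (2 / ((k : ℝ) * ((k : ℝ) - 1) * Real.pi)) * Real.exp (-t ^ 2 / 2) *
              hermiteNormalized (k - 2) t) := by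
  have hcoeff (k : ℕ) : a k = (√(k.factorial : ℝ) * √(2 * π))⁻¹ * ((1 - (-1) ^ k) *
      ∫ x in Ioi t, (x - t) * ((realHermite k).eval x * exp (-x ^ 2 / 2))) := by
    rw [ha, integral_softThreshold_mul_hermiteNormalized_mul_gaussianDensity,
      integral_softThreshold_mul_realHermite_mul_gaussian ht]
  refine ⟨by simp [hcoeff], ?_, fun k hk _ => by simp [hcoeff, hk.neg_one_pow], ?_⟩
  · have h := integral_Ioi_sub_mul_realHermite_succ_mul_gaussian 0 t
    rw [zero_add, realHermite_zero] at h
    rw [hcoeff, h]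
    simp only [eval_one, one_mul, integral_Ioi_gaussian]
    field_simp
    norm_num
  · intro k hk hk3
    obtain ⟨n, rfl⟩ := Nat.exists_eq_add_of_le' (by omega : 2 ≤ k)
    have hc := two_mul_inv_sqrt_factorial_mul_sqrt_two_pi (k := n + 2) (by omega)
    rw [hcoeff, hk.neg_one_pow, integral_Ioi_sub_mul_realHermite_succ_mul_gaussian (n + 1),
      integral_Ioi_realHermite_succ_mul_gaussian]
    rw [Nat.add_sub_cancel] at hc ⊢
    rw [hermiteNormalized_eq]
    linear_combination ((realHermite n).eval t * exp (-t ^ 2 / 2)) * hc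
end

section
/- Let A be a symmetric p×p real matrix, v ∈ ℝ^p a unit vector, W ∈ ℝ^{p×(p−1)} a matrix with orthonormal columns satisfying W Wᵀ + v vᵀ = I_p, and let (λ₁, u₁) be an eigenpair of A with ‖u₁‖₂ = 1 such that λ₁ I_{p−1} − Wᵀ A W is invertible. Then ⟨u₁, v⟩² · (1 + vᵀ A W (λ₁ I_{p−1} − Wᵀ A W)^{−2} Wᵀ A v) = 1. -/
open Matrix

lemma vecMulVec_mulVec_aux {n : Type*} [Fintype n] (v w u : n → ℝ) :
    (vecMulVec v w) *ᵥ u = (w ⬝ᵥ u) • v := by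
  ext i
  simp [vecMulVec_apply, mulVec, dotProduct, Finset.mul_sum, Finset.sum_mul,
    mul_comm, mul_left_comm, mul_assoc]

/-- Eigenvector overlap identity: for a symmetric `A`, unit vector `v`,
semi-orthogonal `W` with `W Wᵀ + v vᵀ = I`, and an eigenpair `(λ₁, u₁)` with
`λ₁ I − WᵀAW` invertible,
`⟨u₁,v⟩² (1 + vᵀAW(λ₁I − WᵀAW)^{−2}WᵀAv) = 1`. -/
theorem eigenvector_overlap_identity (p : ℕ)
    (A : Matrix (Fin p) (Fin p) ℝ) (hA : A.IsSymm)
    (v : Fin p → ℝ) (hv : ∑ i, v i ^ 2 = 1)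
    (W : Matrix (Fin p) (Fin (p - 1)) ℝ)
    (hWo : Wᵀ * W = 1)
    (hW : W * Wᵀ + vecMulVec v v = 1)
    (lam₁ : ℝ) (u₁ : Fin p → ℝ) (hu : ∑ i, u₁ i ^ 2 = 1)
    (heig : A.mulVec u₁ = lam₁ • u₁)
    (hinv : IsUnit (lam₁ • (1 : Matrix (Fin (p - 1)) (Fin (p - 1)) ℝ) - Wᵀ * A * W)) :
    (u₁ ⬝ᵥ v) ^ 2 *
      (1 + v ⬝ᵥ (A * W *
          ((lam₁ • (1 : Matrix (Fin (p - 1)) (Fin (p - 1)) ℝ) - Wᵀ * A * W)⁻¹ *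
           (lam₁ • (1 : Matrix (Fin (p - 1)) (Fin (p - 1)) ℝ) - Wᵀ * A * W)⁻¹) *
          Wᵀ * A).mulVec v) = 1 := by
  set B : Matrix (Fin (p-1)) (Fin (p-1)) ℝ :=
    lam₁ • (1 : Matrix (Fin (p - 1)) (Fin (p - 1)) ℝ) - Wᵀ * A * W with hB
  have hdet : IsUnit B.det := (isUnit_iff_isUnit_det B).mp hinv
  have hBinv : B⁻¹ * B = 1 := nonsing_inv_mul B hdet
  have hBsymm : Bᵀ = B := by
    rw [hB, transpose_sub, transpose_smul, transpose_one]
    congr 1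
    rw [transpose_mul, transpose_mul, transpose_transpose, hA.eq, ← Matrix.mul_assoc]
  have hBisymm : (B⁻¹)ᵀ = B⁻¹ := by rw [transpose_nonsing_inv, hBsymm]
  clear_value B
  set c : ℝ := u₁ ⬝ᵥ v with hc
  set w : Fin (p-1) → ℝ := (Wᵀ * A).mulVec v with hw
  set y : Fin (p-1) → ℝ := Wᵀ.mulVec u₁ with hy
  have hcomm : v ⬝ᵥ u₁ = c := dotProduct_comm v u₁
  have hdecomp : W.mulVec y + c • v = u₁ := by
    have h := congrArg (fun M => M *ᵥ u₁) hW
    simp only [add_mulVec, one_mulVec, vecMulVec_mulVec_aux, hcomm] at h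
    rw [hy, mulVec_mulVec]
    exact h
  clear_value c w y
  have hWAu : (Wᵀ * A).mulVec u₁ = lam₁ • y := by
    rw [← mulVec_mulVec, heig, mulVec_smul, hy]
  have hBy : B.mulVec y = c • w := by
    rw [hB, sub_mulVec, smul_mulVec, one_mulVec]
    have h2 : (Wᵀ * A * W).mulVec y = lam₁ • y - c • w := by
      rw [← mulVec_mulVec, show W.mulVec y = u₁ - c • v from by
        rw [← hdecomp]; abel, mulVec_sub, hWAu, mulVec_smul, hw]
    rw [h2]; abel
  have hyeq : y = c • B⁻¹.mulVec w := by
    calc y = (B⁻¹ * B).mulVec y := by rw [hBinv, one_mulVec]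
    _ = B⁻¹.mulVec (B.mulVec y) := (mulVec_mulVec _ _ _).symm
    _ = c • B⁻¹.mulVec w := by rw [hBy, mulVec_smul]
  have h1 : u₁ ⬝ᵥ u₁ = 1 := by simpa [dotProduct, sq] using hu
  set t : ℝ := w ⬝ᵥ (B⁻¹ * B⁻¹).mulVec w with ht
  clear_value t
  have hnorm : c ^ 2 * t + c ^ 2 = 1 := by
    have h2 : u₁ ⬝ᵥ ((W * Wᵀ + vecMulVec v v).mulVec u₁) = 1 := by
      rw [hW, one_mulVec, h1]
    rw [add_mulVec, dotProduct_add, vecMulVec_mulVec_aux, hcomm, dotProduct_smul,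
      smul_eq_mul, ← hc] at h2
    have h3 : u₁ ⬝ᵥ (W * Wᵀ).mulVec u₁ = y ⬝ᵥ y := by
      rw [← mulVec_mulVec, dotProduct_mulVec, ← mulVec_transpose, ← hy]
    rw [h3, hyeq] at h2
    have h4 : (c • B⁻¹.mulVec w) ⬝ᵥ (c • B⁻¹.mulVec w)
        = c ^ 2 * (w ⬝ᵥ (B⁻¹ * B⁻¹).mulVec w) := by
      rw [smul_dotProduct, dotProduct_smul, smul_eq_mul, smul_eq_mul,
        dotProduct_mulVec, ← mulVec_transpose, hBisymm, mulVec_mulVec,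
        dotProduct_comm]
      ring
    rw [h4, ← ht] at h2
    nlinarith [h2]
  have hmain : v ⬝ᵥ (A * W * (B⁻¹ * B⁻¹) * Wᵀ * A).mulVec v = t := by
    have e1 : (A * W * (B⁻¹ * B⁻¹) * Wᵀ * A).mulVec v
        = (A * W).mulVec ((B⁻¹ * B⁻¹).mulVec w) := by
      rw [hw, mulVec_mulVec, mulVec_mulVec, Matrix.mul_assoc, Matrix.mul_assoc]
    rw [e1, dotProduct_mulVec, ← mulVec_transpose, transpose_mul, hA.eq, ← hw, ht]
  rw [hmain]
  nlinarith [hnorm]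
end

section
/- Suppose f: ℝ → ℝ is continuous, twice differentiable outside a finite set, with |f(x)|, |f'(x)|, |f''(x)| ≤ c e^{c|x|} wherever defined. Let T_η[f](x) := E[f(x + ηG)] with G a standard Gaussian and η ∈ (0,1). If f is twice differentiable on the interval (x−δ, x+δ), then |f'(x) − T_η[f'](x)| ≤ C(δ e^{C|x|} + e^{C|x|} e^{−C'(δ/η)²}) for constants C, C' depending only on c. -/
/-!
Write `f'(x) - T_η[f'](x) = E[f'(x) - f'(x + ηG)]` and split according to whether
`|G| ≤ R := min(δ, 1)/(2η)`. There `x + ηG` stays in the interval where `f` is twice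
differentiable, and the fundamental theorem of calculus (with `|f''|` bounded off a finite set)
bounds the integrand by `O(δ e^{c|x|})`. Elsewhere the integrand is at most
`2c e^{c|x|} e^{c|G|}`, and `E[e^{a|G|}] ≤ 2e^{a²/2}` turns this into a tail of order
`e^{c|x|} e^{-R²/4}`. Capping `δ` at `1` keeps the Lipschitz constant of `f'` of size
`e^{c|x|}`; when `δ > 1` the tail is then absorbed by the term `δ e^{C|x|}`.
-/

open MeasureTheory ProbabilityTheory Real Set

lemma exp_mul_abs_le_add (a g : ℝ) : exp (a * |g|) ≤ exp (a * g) + exp (-a * g) := by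
  rcases abs_choice g with h | h <;> rw [h]
  · linarith [exp_pos (-a * g)]
  · rw [show a * -g = -a * g by ring]
    linarith [exp_pos (a * g)]

lemma integral_exp_mul_gaussianReal (a : ℝ) :
    ∫ g, exp (a * g) ∂gaussianReal 0 1 = exp (a ^ 2 / 2) := by
  have h := congrFun (mgf_fun_id_gaussianReal (μ := 0) (v := 1)) a
  simp only [mgf] at h
  rw [h]
  congr 1
  push_cast
  ring

lemma integrable_exp_mul_abs_gaussianReal (a : ℝ) :
    Integrable (fun g => exp (a * |g|)) (gaussianReal 0 1) :=
  ((integrable_exp_mul_gaussianReal a).add (integrable_exp_mul_gaussianReal (-a))).mono'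
    (by fun_prop) (ae_of_all _ fun g => by
      rw [norm_of_nonneg (exp_pos _).le]
      exact exp_mul_abs_le_add a g)

lemma integral_exp_mul_abs_gaussianReal_le (a : ℝ) :
    ∫ g, exp (a * |g|) ∂gaussianReal 0 1 ≤ 2 * exp (a ^ 2 / 2) :=
  calc ∫ g, exp (a * |g|) ∂gaussianReal 0 1
      ≤ ∫ g, (exp (a * g) + exp (-a * g)) ∂gaussianReal 0 1 :=
        integral_mono (integrable_exp_mul_abs_gaussianReal a)
          ((integrable_exp_mul_gaussianReal a).add (integrable_exp_mul_gaussianReal (-a)))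
          (exp_mul_abs_le_add a)
    _ = 2 * exp (a ^ 2 / 2) := by
        rw [integral_add (integrable_exp_mul_gaussianReal a) (integrable_exp_mul_gaussianReal (-a)),
          integral_exp_mul_gaussianReal, integral_exp_mul_gaussianReal, neg_sq]
        ring

lemma integral_abs_le_of_near_far {φ : ℝ → ℝ} {A B c R : ℝ}
    (hφ : AEStronglyMeasurable φ (gaussianReal 0 1)) (hA : 0 ≤ A) (hB : 0 ≤ B) (hR : 0 ≤ R)
    (hnear : ∀ᵐ g ∂gaussianReal 0 1, |g| ≤ R → |φ g| ≤ A)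
    (hfar : ∀ᵐ g ∂gaussianReal 0 1, |φ g| ≤ B * exp (c * |g|)) :
    ∫ g, |φ g| ∂gaussianReal 0 1 ≤ A + 2 * B * exp (3 * c ^ 2 / 2) * exp (-(R ^ 2 / 4)) := by
  set K := B * exp (-R ^ 2)
  -- Chernoff's trick: on `|g| > R`, `e^{c|g|} ≤ e^{-R²} e^{(c+R)|g|}`.
  have hdom : ∀ᵐ g ∂gaussianReal 0 1, |φ g| ≤ A + K * exp ((c + R) * |g|) := by
    filter_upwards [hnear, hfar] with g hn hf
    have hK : 0 ≤ K * exp ((c + R) * |g|) := by positivity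
    rcases le_or_gt |g| R with hg | hg
    · linarith [hn hg]
    · calc |φ g| ≤ B * exp (c * |g|) := hf
        _ ≤ K * exp ((c + R) * |g|) := by
          rw [mul_assoc, ← exp_add]
          gcongr
          nlinarith
        _ ≤ _ := le_add_of_nonneg_left hA
  have hmajorant : Integrable (fun g => A + K * exp ((c + R) * |g|)) (gaussianReal 0 1) :=
    (integrable_const A).add ((integrable_exp_mul_abs_gaussianReal (c + R)).const_mul K)
  have hexponent : -R ^ 2 + (c + R) ^ 2 / 2 ≤ 3 * c ^ 2 / 2 + -(R ^ 2 / 4) := by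
    nlinarith [sq_nonneg (R - 2 * c)]
  calc ∫ g, |φ g| ∂gaussianReal 0 1
      ≤ ∫ g, (A + K * exp ((c + R) * |g|)) ∂gaussianReal 0 1 :=
        integral_mono_ae (hmajorant.mono' hφ.norm (by simpa using hdom)) hmajorant hdom
    _ = A + K * ∫ g, exp ((c + R) * |g|) ∂gaussianReal 0 1 := by
        rw [integral_add (integrable_const A)
          ((integrable_exp_mul_abs_gaussianReal (c + R)).const_mul K), integral_const,
          integral_const_mul]
        simp
    _ ≤ A + K * (2 * exp ((c + R) ^ 2 / 2)) := by
        gcongr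
        exact integral_exp_mul_abs_gaussianReal_le (c + R)
    _ = A + 2 * B * exp (-R ^ 2 + (c + R) ^ 2 / 2) := by
        rw [exp_add]
        ring
    _ ≤ A + 2 * B * exp (3 * c ^ 2 / 2 + -(R ^ 2 / 4)) := by gcongr
    _ = A + 2 * B * exp (3 * c ^ 2 / 2) * exp (-(R ^ 2 / 4)) := by
        rw [exp_add]
        ring

lemma ae_add_mul_notMem_gaussianReal {S : Set ℝ} (hS : S.Countable) (x : ℝ) {η : ℝ}
    (hη : η ≠ 0) : ∀ᵐ g ∂gaussianReal 0 1, x + η * g ∉ S := by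
  have hpre : ((fun g => x + η * g) ⁻¹' S).Countable :=
    hS.preimage fun g₁ g₂ h => by simpa [hη] using h
  exact measure_eq_zero_iff_ae_notMem.mp
    (gaussianReal_absolutelyContinuous 0 one_ne_zero (hpre.measure_zero volume))

lemma le_of_le_off_countable {S : Set ℝ} (hS : S.Countable) {u v : ℝ → ℝ} {x : ℝ}
    (hu : ContinuousAt u x) (hv : ContinuousAt v x) (h : ∀ y ∉ S, u y ≤ v y) : u x ≤ v x :=
  ContinuousWithinAt.closure_le (s := Sᶜ) (by rw [(hS.dense_compl ℝ).closure_eq]; trivial)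
    hu.continuousWithinAt hv.continuousWithinAt h

lemma abs_sub_le_of_abs_deriv_le_off_countable {u : ℝ → ℝ} {S : Set ℝ} (hS : S.Countable)
    {a b M : ℝ} (hdiff : ∀ y ∈ uIcc a b, DifferentiableAt ℝ u y)
    (hbound : ∀ y ∈ uIcc a b, y ∉ S → |deriv u y| ≤ M) :
    |u b - u a| ≤ M * |b - a| := by
  have hae : ∀ᵐ y, y ∈ uIoc a b → ‖deriv u y‖ ≤ M := by
    filter_upwards [measure_eq_zero_iff_ae_notMem.mp (hS.measure_zero volume)] with y hyS hy
    exact hbound y (uIoc_subset_uIcc hy) hyS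
  have hint : IntervalIntegrable (deriv u) volume a b := by
    rw [intervalIntegrable_iff]
    refine (integrableOn_const (C := M) measure_Ioc_lt_top.ne).mono'
      (measurable_deriv u).aestronglyMeasurable ?_
    exact (ae_restrict_iff' measurableSet_uIoc).mpr hae
  rw [← intervalIntegral.integral_eq_sub_of_hasDerivAt (fun y hy => (hdiff y hy).hasDerivAt) hint]
  exact intervalIntegral.norm_integral_le_of_norm_le_const_ae hae

lemma exp_mul_abs_add_mul_le {c η : ℝ} (hc : 0 ≤ c) (hη : |η| ≤ 1) (x g : ℝ) :
    exp (c * |x + η * g|) ≤ exp (c * |x|) * exp (c * |g|) := by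
  rw [← exp_add, ← mul_add]
  gcongr
  calc |x + η * g| ≤ |x| + |η| * |g| := by rw [← abs_mul]; exact abs_add_le _ _
    _ ≤ |x| + |g| := by nlinarith [abs_nonneg g]

lemma abs_sub_le_of_abs_deriv_le_exp {u : ℝ → ℝ} {S : Set ℝ} (hS : S.Countable) {c x δ t : ℝ}
    (hc : 0 ≤ c) (hdiff : ∀ y ∈ Ioo (x - δ) (x + δ), DifferentiableAt ℝ u y)
    (hbound : ∀ y ∉ S, |deriv u y| ≤ c * exp (c * |y|)) (ht : |t| < min δ 1) :
    |u x - u (x + t)| ≤ c * exp (c * (|x| + 1)) * |t| := by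
  have hclose : ∀ y ∈ uIcc x (x + t), |y - x| < min δ 1 := fun y hy =>
    (abs_sub_left_of_mem_uIcc hy).trans_lt (by simpa using ht)
  rw [abs_sub_comm]
  convert abs_sub_le_of_abs_deriv_le_off_countable hS (fun y hy => hdiff y ?_) (fun y hy hyS => ?_)
    using 2
  · ring_nf
  · have := abs_lt.mp ((hclose y hy).trans_le (min_le_left δ 1))
    constructor <;> linarith
  · have hy1 : |y| ≤ |x| + 1 := by
      have := (hclose y hy).trans_le (min_le_right δ 1)
      have := abs_sub_abs_le_abs_sub y x
      linarith
    exact (hbound y hyS).trans (by gcongr)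

lemma exp_neg_sq_min_le {δ η : ℝ} (hδ : 0 < δ) (hη : 0 < η) :
    exp (-((min δ 1 / (2 * η)) ^ 2 / 4)) ≤ δ + exp (-(1 / 16 * (δ / η) ^ 2)) := by
  rcases le_total δ 1 with hδ1 | hδ1
  · rw [min_eq_left hδ1]
    refine le_add_of_nonneg_of_le hδ.le (le_of_eq ?_)
    congr 1
    field_simp
    ring
  · refine le_add_of_le_of_nonneg ((exp_le_one_iff.mpr ?_).trans hδ1) (exp_pos _).le
    have := sq_nonneg (min δ 1 / (2 * η))
    linarith

lemma abs_sub_integral_gaussianReal_le {u : ℝ → ℝ} {S : Set ℝ} (hS : S.Countable) {c η x δ : ℝ}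
    (hc : 0 ≤ c) (hη0 : 0 < η) (hη1 : η ≤ 1) (hδ : 0 < δ) (hu : Measurable u)
    (hdiff : ∀ y ∈ Ioo (x - δ) (x + δ), DifferentiableAt ℝ u y)
    (hbound : ∀ y ∉ S, |u y| ≤ c * exp (c * |y|))
    (hbound' : ∀ y ∉ S, |deriv u y| ≤ c * exp (c * |y|)) :
    |u x - ∫ g, u (x + η * g) ∂gaussianReal 0 1| ≤
      c * exp (c * (|x| + 1)) * (δ / 2) +
        2 * (2 * (c * exp (c * |x|))) * exp (3 * c ^ 2 / 2) *
          exp (-((min δ 1 / (2 * η)) ^ 2 / 4)) := by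
  have hux : |u x| ≤ c * exp (c * |x|) :=
    le_of_le_off_countable hS (hdiff x ⟨by linarith, by linarith⟩).continuousAt.abs
      (by fun_prop) hbound
  have hgrowth : ∀ᵐ g ∂gaussianReal 0 1, |u (x + η * g)| ≤ c * exp (c * |x|) * exp (c * |g|) := by
    filter_upwards [ae_add_mul_notMem_gaussianReal hS x hη0.ne'] with g hg
    calc |u (x + η * g)| ≤ c * exp (c * |x + η * g|) := hbound _ hg
      _ ≤ c * exp (c * |x|) * exp (c * |g|) := by
        rw [mul_assoc]
        gcongr
        exact exp_mul_abs_add_mul_le hc (by rwa [abs_of_pos hη0]) x g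
  have hmeas : AEStronglyMeasurable (fun g => u (x + η * g)) (gaussianReal 0 1) :=
    (hu.comp (by fun_prop)).aestronglyMeasurable
  have hint : Integrable (fun g => u (x + η * g)) (gaussianReal 0 1) :=
    ((integrable_exp_mul_abs_gaussianReal c).const_mul _).mono' hmeas (by simpa using hgrowth)
  have hnear : ∀ᵐ g ∂gaussianReal 0 1, |g| ≤ min δ 1 / (2 * η) →
      |u x - u (x + η * g)| ≤ c * exp (c * (|x| + 1)) * (δ / 2) := ae_of_all _ fun g hg => by
    have ht : |η * g| ≤ min δ 1 / 2 := by
      rw [abs_mul, abs_of_pos hη0]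
      calc η * |g| ≤ η * (min δ 1 / (2 * η)) := by gcongr
        _ = min δ 1 / 2 := by field_simp
    refine (abs_sub_le_of_abs_deriv_le_exp hS hc hdiff hbound'
      (ht.trans_lt (half_lt_self (by positivity)))).trans ?_
    gcongr
    exact ht.trans (by gcongr; exact min_le_left δ 1)
  have hfar : ∀ᵐ g ∂gaussianReal 0 1,
      |u x - u (x + η * g)| ≤ 2 * (c * exp (c * |x|)) * exp (c * |g|) := by
    filter_upwards [hgrowth] with g hg
    have hx_le : c * exp (c * |x|) ≤ c * exp (c * |x|) * exp (c * |g|) :=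
      le_mul_of_one_le_right (by positivity) (one_le_exp (by positivity))
    linarith [abs_sub (u x) (u (x + η * g))]
  calc |u x - ∫ g, u (x + η * g) ∂gaussianReal 0 1|
      = |∫ g, (u x - u (x + η * g)) ∂gaussianReal 0 1| := by
        rw [integral_sub (integrable_const _) hint]
        simp
    _ ≤ ∫ g, |u x - u (x + η * g)| ∂gaussianReal 0 1 := abs_integral_le_integral_abs
    _ ≤ _ := integral_abs_le_of_near_far (aestronglyMeasurable_const.sub hmeas) (by positivity)
        (by positivity) (by positivity) hnear hfar

/-- Gaussian smoothing approximation: there are constants `C, C'` depending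
only on `c` such that for every continuous `f` that is twice differentiable
outside a finite set `S` with `|f|, |f'|, |f''| ≤ c e^{c|·|}` wherever defined,
every `η ∈ (0,1)`, and every `x, δ` with `f` twice differentiable on
`(x−δ, x+δ)`, one has
`|f'(x) − T_η[f'](x)| ≤ C(δ e^{C|x|} + e^{C|x|} e^{−C'(δ/η)²})`, where
`T_η[g](x) = E[g(x + ηG)]` with `G` standard Gaussian. -/
theorem gaussian_smoothing_derivative_bound (c : ℝ) (hc : 0 < c) :
    ∃ C C' : ℝ, 0 < C ∧ 0 < C' ∧
      ∀ (f : ℝ → ℝ) (S : Finset ℝ),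
        Continuous f →
        (∀ y ∉ (S : Set ℝ), DifferentiableAt ℝ f y) →
        (∀ y ∉ (S : Set ℝ), DifferentiableAt ℝ (deriv f) y) →
        (∀ y, |f y| ≤ c * Real.exp (c * |y|)) →
        (∀ y ∉ (S : Set ℝ), |deriv f y| ≤ c * Real.exp (c * |y|)) →
        (∀ y ∉ (S : Set ℝ), |deriv (deriv f) y| ≤ c * Real.exp (c * |y|)) →
        ∀ η ∈ Set.Ioo (0 : ℝ) 1, ∀ x δ : ℝ, 0 < δ →
        (∀ y ∈ Set.Ioo (x - δ) (x + δ),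
          DifferentiableAt ℝ f y ∧ DifferentiableAt ℝ (deriv f) y) →
        |deriv f x - ∫ g, deriv f (x + η * g) ∂(gaussianReal 0 1)|
          ≤ C * (δ * Real.exp (C * |x|) +
              Real.exp (C * |x|) * Real.exp (-(C' * (δ / η) ^ 2))) := by
  set C := c * (exp c + 4 * exp (3 * c ^ 2 / 2))
  refine ⟨C, 1 / 16, by positivity, by norm_num, ?_⟩
  intro f S _ _ _ _ hf' hf'' η ⟨hη0, hη1⟩ x δ hδ hdiff
  set E := exp (-(1 / 16 * (δ / η) ^ 2))
  have hcC : c ≤ C := by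
    have : 1 ≤ exp c + 4 * exp (3 * c ^ 2 / 2) := by linarith [one_le_exp hc.le, exp_pos (3 * c ^ 2 / 2)]
    nlinarith
  calc |deriv f x - ∫ g, deriv f (x + η * g) ∂(gaussianReal 0 1)|
      ≤ c * exp (c * (|x| + 1)) * (δ / 2) + 2 * (2 * (c * exp (c * |x|))) *
          exp (3 * c ^ 2 / 2) * exp (-((min δ 1 / (2 * η)) ^ 2 / 4)) :=
        abs_sub_integral_gaussianReal_le S.countable_toSet hc.le hη0 hη1.le hδ
          (measurable_deriv f) (fun y hy => (hdiff y hy).2) hf' hf''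
    _ ≤ c * exp (c * |x| + c) * (δ + E) +
          2 * (2 * (c * exp (c * |x|))) * exp (3 * c ^ 2 / 2) * (δ + E) := by
        rw [mul_add_one]
        gcongr ?_ + ?_
        · gcongr
          linarith [exp_pos (-(1 / 16 * (δ / η) ^ 2))]
        · gcongr
          exact exp_neg_sq_min_le hδ hη0
    _ = C * exp (c * |x|) * (δ + E) := by rw [exp_add]; ring
    _ ≤ C * exp (C * |x|) * (δ + E) := by gcongr
    _ = C * (δ * exp (C * |x|) + exp (C * |x|) * E) := by ring
end
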